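/- Explicit coefficient formula for the second kind: the coefficient of x^j in D̂_n(x|a_1,…,a_r) equals ∑_{l=j}^n C(n,l) S_1(l,j) D̂_{n-l}(a_1,…,a_r). -/

import Mathlib

/-!
By the chain rule, `f = (1+t)^x = exp(x log(1+t))` satisfies `(1+t) f' = x f` with `f(0) = 1`,
which forces `f = ∑ (x)_l t^l / l!`. Cancelling the nonzero factor `∏ ((1+t)^{a_j} - 1)` from the
generating identities at `x` and at `0` gives `∑ D̂_n(x) t^n/n! = (∑ D̂_n t^n/n!) (1+t)^x`, i.e.
`D̂_n(x) = ∑_l C(n,l) (x)_l D̂_{n-l}`; expanding `(x)_l` by the Stirling numbers and comparing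
coefficients of `x^j` gives the formula.
-/

open Finset PowerSeries

/-- Exponential generating function: `∑ f n * t^n / n!`. -/
noncomputable def egf (f : ℕ → ℚ) : PowerSeries ℚ :=
  PowerSeries.mk fun n => f n / n.factorial

/-- The formal power series `log(1+t) = ∑_{m≥1} (-1)^{m-1} t^m / m`. -/
noncomputable def log1p : PowerSeries ℚ :=
  PowerSeries.mk fun n => if n = 0 then 0 else (-1) ^ (n - 1) / n

/-- Formal exponential composition: for `f` with zero constant term this is
`exp(f) = ∑_k f^k / k!` (the sum in each coefficient is finite). -/
noncomputable def expPS (f : PowerSeries ℚ) : PowerSeries ℚ :=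
  PowerSeries.mk fun n =>
    ∑ k ∈ Finset.range (n + 1), (PowerSeries.coeff n (f ^ k)) / k.factorial

/-- `(1+t)^a := exp(a · log(1+t))` as a formal power series. -/
noncomputable def onePow (a : ℚ) : PowerSeries ℚ := expPS (PowerSeries.C a * log1p)

/-- `e^{a t} = ∑ a^n t^n / n!`. -/
noncomputable def expAt (a : ℚ) : PowerSeries ℚ :=
  PowerSeries.mk fun n => a ^ n / n.factorial

/-- Falling factorial `(x)_n = x(x-1)⋯(x-n+1)`. -/
noncomputable def ffall (x : ℚ) (n : ℕ) : ℚ := ∏ i ∈ Finset.range n, (x - i)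

lemma ffall_succ (x : ℚ) (n : ℕ) : ffall x (n + 1) = (x - n) * ffall x n := by
  rw [ffall, prod_range_succ, mul_comm, ← ffall]

lemma log1p_eq_log : log1p = log ℚ := by
  ext n
  rcases n with _ | n
  · simp [log1p]
  · simp [log1p, pow_succ]

lemma coeff_pow_eq_zero_of_lt {R : Type*} [CommSemiring R] {f : R⟦X⟧}
    (hf : constantCoeff f = 0) {n k : ℕ} (h : n < k) : coeff n (f ^ k) = 0 :=
  X_pow_dvd_iff.mp (pow_dvd_pow_of_dvd (X_dvd_iff.mpr hf) k) n h

lemma expPS_eq_subst {f : ℚ⟦X⟧} (hf : constantCoeff f = 0) : expPS f = (exp ℚ).subst f := by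
  ext n
  rw [coeff_subst' (HasSubst.of_constantCoeff_zero' hf), expPS, coeff_mk,
    finsum_eq_sum_of_support_subset (s := range (n + 1))]
  · refine sum_congr rfl fun k _ => ?_
    simp [div_eq_inv_mul]
  · intro k hk
    rw [Function.mem_support] at hk
    rw [coe_range, Set.mem_Iio, Nat.lt_succ_iff]
    by_contra! hnk
    exact hk (by rw [coeff_pow_eq_zero_of_lt hf hnk, smul_zero])

lemma one_add_X_mul_derivative_log (A : Type*) [CommRing A] [Algebra ℚ A] :
    (1 + X) * d⁄dX A (log A) = 1 := by
  rw [deriv_log]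
  ext m
  rcases m with _ | m
  · simp
  · rw [add_mul, one_mul, map_add, coeff_succ_X_mul]
    simp [pow_succ]

lemma one_add_X_mul_derivative_onePow (x : ℚ) :
    (1 + X) * d⁄dX ℚ (onePow x) = C x * onePow x := by
  have hg : constantCoeff (C x * log ℚ) = 0 := by simp
  rw [onePow, log1p_eq_log, expPS_eq_subst hg,
    derivative_subst (HasSubst.of_constantCoeff_zero' hg), derivative_exp]
  simp only [Derivation.leibniz, derivative_C, smul_eq_mul]
  linear_combination (C x * (exp ℚ).subst (C x * log ℚ)) * one_add_X_mul_derivative_log ℚ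

lemma coeff_succ_of_one_add_X_mul_derivative {x : ℚ} {f : ℚ⟦X⟧}
    (hf : (1 + X) * d⁄dX ℚ f = C x * f) (n : ℕ) :
    (n + 1) * coeff (n + 1) f = (x - n) * coeff n f := by
  have h := congrArg (coeff n) hf
  rw [add_mul, one_mul, map_add, coeff_derivative, coeff_C_mul] at h
  rcases n with _ | n
  · simpa [coeff_zero_eq_constantCoeff] using h
  · rw [coeff_succ_X_mul, coeff_derivative] at h
    push_cast at h ⊢
    linarith

lemma coeff_eq_ffall_of_one_add_X_mul_derivative {x : ℚ} {f : ℚ⟦X⟧}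
    (hf : (1 + X) * d⁄dX ℚ f = C x * f) (n : ℕ) :
    coeff n f = ffall x n / n.factorial * constantCoeff f := by
  induction n with
  | zero => simp [ffall]
  | succ n ih =>
    have h : coeff (n + 1) f = (x - n) / (n + 1) * coeff n f := by
      rw [div_mul_eq_mul_div, eq_div_iff (by positivity),
        mul_comm, coeff_succ_of_one_add_X_mul_derivative hf n]
    rw [h, ih, ffall_succ, Nat.factorial_succ]
    push_cast
    field_simp

lemma constantCoeff_onePow (x : ℚ) : constantCoeff (onePow x) = 1 := by
  rw [← coeff_zero_eq_constantCoeff_apply]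
  simp [onePow, expPS]

lemma onePow_eq_egf_ffall (x : ℚ) : onePow x = egf (ffall x) := by
  ext n
  rw [coeff_eq_ffall_of_one_add_X_mul_derivative (one_add_X_mul_derivative_onePow x),
    constantCoeff_onePow, mul_one, egf, coeff_mk]

lemma onePow_zero : onePow 0 = 1 := by
  ext n
  rw [onePow_eq_egf_ffall, egf, coeff_mk, coeff_one]
  rcases n with _ | n
  · simp [ffall]
  · simp [ffall, prod_range_succ']

lemma onePow_sub_one_ne_zero {a : ℚ} (ha : a ≠ 0) : onePow a - 1 ≠ 0 := by
  intro h
  have h1 := congrArg (coeff 1) h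
  exact ha (by simpa [onePow_eq_egf_ffall, egf, ffall, coeff_one] using h1)

lemma egf_mul (f g : ℕ → ℚ) :
    egf f * egf g = egf fun n => ∑ l ∈ range (n + 1), n.choose l * f l * g (n - l) := by
  ext n
  rw [coeff_mul, Nat.sum_antidiagonal_eq_sum_range_succ_mk]
  simp only [egf, coeff_mk, sum_div]
  refine sum_congr rfl fun l hl => ?_
  rw [Nat.cast_choose ℚ (Nat.lt_succ_iff.mp (mem_range.mp hl))]
  field_simp

lemma egf_injective : Function.Injective egf := by
  intro f g h
  funext n
  have hn := congrArg (coeff n) h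
  simpa [egf, Nat.factorial_ne_zero] using hn

lemma coeff_eq_sum_of_eval_eq_sum_ffall {S1 : ℕ → ℕ → ℚ}
    (hS1 : ∀ (l : ℕ) (x : ℚ), ffall x l = ∑ j ∈ range (l + 1), S1 l j * x ^ j)
    {P : Polynomial ℚ} {c : ℕ → ℚ} {N : ℕ}
    (hP : ∀ x, P.eval x = ∑ l ∈ range (N + 1), c l * ffall x l) (j : ℕ) :
    P.coeff j = ∑ l ∈ Icc j N, c l * S1 l j := by
  have hP' : P = ∑ l ∈ range (N + 1), ∑ i ∈ range (l + 1),
      Polynomial.C (c l * S1 l i) * Polynomial.X ^ i := by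
    refine Polynomial.funext fun x => ?_
    simp [Polynomial.eval_finsetSum, hP, hS1, mul_sum, mul_assoc]
  simp only [hP', Polynomial.finsetSum_coeff, Polynomial.coeff_C_mul_X_pow, sum_ite_eq]
  rw [← sum_filter]
  congr 1
  ext l
  simp only [mem_filter, mem_range, mem_Icc]
  omega

theorem stmt19 (r : ℕ) (a : Fin r → ℚ) (ha : ∀ j, a j ≠ 0) (Dh : ℕ → Polynomial ℚ)
    (hDh : ∀ x : ℚ, (∏ j, (onePow (a j) - 1)) * egf (fun n => (Dh n).eval x) = (∏ j, onePow (a j)) * log1p ^ r * onePow x)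
    (S1 : ℕ → ℕ → ℚ) (hS1 : ∀ (l : ℕ) (x : ℚ), ffall x l = ∑ j ∈ Finset.range (l + 1), S1 l j * x ^ j)
    (n j : ℕ) :
    (Dh n).coeff j = ∑ l ∈ Finset.Icc j n, (n.choose l : ℚ) * S1 l j * (Dh (n - l)).eval 0 := by
  have hprod : ∏ j, (onePow (a j) - 1) ≠ 0 :=
    prod_ne_zero_iff.mpr fun i _ => onePow_sub_one_ne_zero (ha i)
  have hshift (x : ℚ) :
      egf (fun n => (Dh n).eval x) = egf (fun n => (Dh n).eval 0) * onePow x :=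
    mul_left_cancel₀ hprod <| by rw [hDh x, ← mul_assoc, hDh 0, onePow_zero, mul_one]
  have heval (x : ℚ) : (Dh n).eval x =
      ∑ l ∈ range (n + 1), (n.choose l * (Dh (n - l)).eval 0) * ffall x l := by
    have h := hshift x
    rw [mul_comm, onePow_eq_egf_ffall, egf_mul] at h
    rw [congrFun (egf_injective h) n]
    exact sum_congr rfl fun l _ => by ring
  rw [coeff_eq_sum_of_eval_eq_sum_ffall hS1 heval j]
  exact sum_congr rfl fun l _ => by ring
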